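/- arXiv:1401.0631 — 3 statements merged into one kernel-verified Lean document; each statement's English description precedes it below -/
import Mathlib

section
/- Let f : Y → X be a smooth map and let (ω,ρ) ∈ Ω^{p+1}(X) × Ω^p(Y) be a relative closed form (dω = 0, f^*ω = dρ) representing an integral relative de Rham class. If (C,C') = ∂(D,D') = ∂(E,E') are two expressions of a relative boundary, then ∫_D ω + ∫_{D'} ρ ≡ ∫_E ω + ∫_{E'} ρ (mod ℤ). Hence the defining formula of a relative Cheeger–Simons character of type II is well defined. -/
/-!
STATEMENT 1. Abstract model: `A2, A1, A0 = C_{p+2}(X), C_{p+1}(X), C_p(X)`;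
`B2, B1, B0 = C_{p+1}(Y), C_p(Y), C_{p-1}(Y)`; `dX2, dX1, dY2, dY1` boundary maps,
`fq, fp` the push-forwards `f_*`.  A relative form `(ω,ρ)` is modelled by its
integration pairings `Iω : C_{p+1}(X) →+ ℝ`, `Jρ : C_p(Y) →+ ℝ`; relative
closedness (`dω = 0`, `f^*ω = dρ`) reads `Iω ∘ ∂_X = 0` and `Iω(f_*E) = Jρ(∂E)`
(Stokes).  Integrality: `Iω C + Jρ C' ∈ ℤ` on every relative `(p+1)`-cycle.
If `∂(D,D') = ∂(E,E')` then `∫_D ω + ∫_{D'} ρ ≡ ∫_E ω + ∫_{E'} ρ (mod ℤ)`: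
the type II character formula is well defined. -/
theorem stmt_1
    {A2 A1 A0 B2 B1 B0 : Type} [AddCommGroup A2] [AddCommGroup A1] [AddCommGroup A0]
    [AddCommGroup B2] [AddCommGroup B1] [AddCommGroup B0]
    (dX2 : A2 →+ A1) (dX1 : A1 →+ A0) (dY2 : B2 →+ B1) (dY1 : B1 →+ B0)
    (fq : B2 →+ A1) (fp : B1 →+ A0)
    (Iω : A1 →+ ℝ) (Jρ : B1 →+ ℝ)
    (hclosed : ∀ E : A2, Iω (dX2 E) = 0)
    (hrel : ∀ E : B2, Iω (fq E) = Jρ (dY2 E))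
    (hint : ∀ (C : A1) (C' : B1), dX1 C + fp C' = 0 → dY1 C' = 0 →
      ∃ n : ℤ, Iω C + Jρ C' = n)
    (D E : A1) (D' E' : B1)
    (hb1 : dX1 D + fp D' = dX1 E + fp E')
    (hb2 : dY1 D' = dY1 E') :
    ∃ n : ℤ, (Iω D + Jρ D') - (Iω E + Jρ E') = n := by
  obtain ⟨n, hn⟩ := hint (D - E) (D' - E')
    (by simp only [map_sub]; rw [sub_add_sub_comm, hb1, sub_self])
    (by simp only [map_sub]; rw [hb2, sub_self])
  exact ⟨n, by simp only [map_sub] at hn; linarith⟩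
end

section
/- Let f : Y → X be smooth and let ω = 0. Then Λ_0, the set of p-forms ρ on Y such that (0,ρ) represents an integral relative de Rham class, equals the set of closed p-forms ρ on Y whose integral over every p-cycle C' of Y with f_*[C'] = 0 in H_p(X) is an integer. -/
/-!
STATEMENT 2. Abstract model: `A1, A0 = C_{p+1}(X), C_p(X)`;
`B2, B1, B0 = C_{p+1}(Y), C_p(Y), C_{p-1}(Y)`; `dX1, dY2, dY1` boundaries, `fp`
the push-forward `f_* : C_p(Y) → C_p(X)`.  A `p`-form `ρ` on `Y` is modelled by
its pairing `J : C_p(Y) →+ ℝ`; closedness (`dρ = f^*0 = 0`) reads `J ∘ ∂ = 0`.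
`Λ_0` is the set of closed `ρ` with `(0,ρ)` integral on all relative
`(p+1)`-cycles `(C,C')` (`∂C + f_*C' = 0`, `∂C' = 0`), and the claim is that it
equals the set of closed `ρ` whose integral over every `p`-cycle `C'` of `Y`
with `f_*[C'] = 0` in `H_p(X)` (i.e. `f_*C'` a boundary) is an integer. -/
theorem stmt_2
    {A1 A0 B2 B1 B0 : Type} [AddCommGroup A1] [AddCommGroup A0]
    [AddCommGroup B2] [AddCommGroup B1] [AddCommGroup B0]
    (dX1 : A1 →+ A0) (dY2 : B2 →+ B1) (dY1 : B1 →+ B0)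
    (fp : B1 →+ A0) :
    {J : B1 →+ ℝ | (∀ E : B2, J (dY2 E) = 0) ∧
        ∀ (C : A1) (C' : B1), dX1 C + fp C' = 0 → dY1 C' = 0 → ∃ n : ℤ, J C' = n} =
    {J : B1 →+ ℝ | (∀ E : B2, J (dY2 E) = 0) ∧
        ∀ C' : B1, dY1 C' = 0 → (∃ B : A1, fp C' = dX1 B) → ∃ n : ℤ, J C' = n} := by
  ext J
  simp only [Set.mem_setOf_eq]
  constructor
  · rintro ⟨hc, h⟩
    refine ⟨hc, fun C' hC' ⟨B, hB⟩ => ?_⟩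
    exact h (-B) C' (by simp [hB]) hC'
  · rintro ⟨hc, h⟩
    refine ⟨hc, fun C C' hCC' hC' => ?_⟩
    exact h C' hC' ⟨-C, by rw [map_neg, eq_neg_iff_add_eq_zero, add_comm]; exact hCC'⟩
end

section
/- Let f : Y → X be smooth, and define i₃ : CS^{p-1}(Y) → CS^p_{II}(f) by i₃(ξ,η) = (χ, 0, η) with χ(C,C') = -ξ(C'). Then i₃ is a group homomorphism whose kernel is exactly the set of characters (ξ,η) on Y that are restrictions f^* of flat characters on X (characters with ω = 0), and whose image acts on CS^p_{II}(f) with orbit space the group CS^p_{III}(f) of type III characters. In particular there is an exact sequence 0 → CS^{p-1}(Y)/CS^{p-1}_{fl}(X) → CS^p_{II}(f) → CS^p_{III}(f) → 0. -/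
/-!
Shared abstract model of the mapping-cone chain complex and of relative
Cheeger–Simons characters.  The abelian groups play the roles of smooth singular
chain groups:
`A2, A1, A0, Am1 = C_{p+2}(X), C_{p+1}(X), C_p(X), C_{p-1}(X)` and
`B2, B1, B0, Bm1 = C_{p+1}(Y), C_p(Y), C_{p-1}(Y), C_{p-2}(Y)`;
`dX•, dY•` are the boundary operators and `fq, fp, fm` the push-forwards `f_*`
in degrees `p+1, p, p-1`.  Differential forms are modelled by their integration
pairings (homomorphisms to `ℝ`), and `U(1) = ℝ/ℤ` is `AddCircle (1 : ℝ)`.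
-/
structure ChainData (A2 A1 A0 Am1 B2 B1 B0 Bm1 : Type)
    [AddCommGroup A2] [AddCommGroup A1] [AddCommGroup A0] [AddCommGroup Am1]
    [AddCommGroup B2] [AddCommGroup B1] [AddCommGroup B0] [AddCommGroup Bm1] :
    Type where
  dX2 : A2 →+ A1
  dX1 : A1 →+ A0
  dX0 : A0 →+ Am1
  dY2 : B2 →+ B1
  dY1 : B1 →+ B0
  dY0 : B0 →+ Bm1
  fq : B2 →+ A1
  fp : B1 →+ A0
  fm : B0 →+ Am1

variable {A2 A1 A0 Am1 B2 B1 B0 Bm1 : Type}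
  [AddCommGroup A2] [AddCommGroup A1] [AddCommGroup A0] [AddCommGroup Am1]
  [AddCommGroup B2] [AddCommGroup B1] [AddCommGroup B0] [AddCommGroup Bm1]

/-- The group `Z_p(f)` of relative `p`-cycles of the mapping cone complex:
pairs `(C,C')` with `∂C + f_*C' = 0` and `∂C' = 0`. -/
def relCycles (d : ChainData A2 A1 A0 Am1 B2 B1 B0 Bm1) : AddSubgroup (A0 × B0) where
  carrier := {z | d.dX0 z.1 + d.fm z.2 = 0 ∧ d.dY0 z.2 = 0}
  zero_mem' := by simp
  add_mem' := by
    intro a b ha hb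
    refine ⟨?_, ?_⟩
    · show d.dX0 (a.1 + b.1) + d.fm (a.2 + b.2) = 0
      rw [map_add, map_add, add_add_add_comm, ha.1, hb.1, add_zero]
    · show d.dY0 (a.2 + b.2) = 0
      rw [map_add, ha.2, hb.2, add_zero]
  neg_mem' := by
    intro a ha
    refine ⟨?_, ?_⟩
    · show d.dX0 (-a.1) + d.fm (-a.2) = 0
      rw [map_neg, map_neg, ← neg_add, ha.1, neg_zero]
    · show d.dY0 (-a.2) = 0
      rw [map_neg, ha.2, neg_zero]

/-- The group `Z_{p-1}(Y)` of `(p-1)`-cycles of `Y`. -/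
def cyclesY (d : ChainData A2 A1 A0 Am1 B2 B1 B0 Bm1) : AddSubgroup B0 where
  carrier := {x | d.dY0 x = 0}
  zero_mem' := by simp
  add_mem' := by
    intro a b ha hb
    show d.dY0 (a + b) = 0
    rw [map_add, ha, hb, add_zero]
  neg_mem' := by
    intro a ha
    show d.dY0 (-a) = 0
    rw [map_neg, ha, neg_zero]

/-- The projection `π₂ : Z_p(f) → Z_{p-1}(Y)`, `(C,C') ↦ C'`. -/
def proj2 (d : ChainData A2 A1 A0 Am1 B2 B1 B0 Bm1) :
    relCycles d →+ cyclesY d where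
  toFun z := ⟨z.val.2, z.property.2⟩
  map_zero' := rfl
  map_add' _ _ := rfl

/-- `(χ, ω, ρ)` is a relative Cheeger–Simons character of type II of degree `p`:
`χ : Z_p(f) → ℝ/ℤ` a homomorphism; `(ω,ρ)` a relative closed form (`dω = 0` and
`f^*ω = dρ`, expressed through the pairings via Stokes) representing an integral
relative de Rham class; and `χ(∂(D,D')) = ∫_D ω + ∫_{D'} ρ mod ℤ`. -/
def IsTypeII (d : ChainData A2 A1 A0 Am1 B2 B1 B0 Bm1)
    (χ : relCycles d →+ AddCircle (1 : ℝ)) (Iω : A1 →+ ℝ) (Jρ : B1 →+ ℝ) : Prop :=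
  (∀ E : A2, Iω (d.dX2 E) = 0) ∧
  (∀ E : B2, Iω (d.fq E) = Jρ (d.dY2 E)) ∧
  (∀ (C : A1) (C' : B1), d.dX1 C + d.fp C' = 0 → d.dY1 C' = 0 →
      ∃ n : ℤ, Iω C + Jρ C' = n) ∧
  (∀ (D : A1) (D' : B1) (hz : (d.dX1 D + d.fp D', -(d.dY1 D')) ∈ relCycles d),
      χ ⟨(d.dX1 D + d.fp D', -(d.dY1 D')), hz⟩ =
        ((Iω D + Jρ D' : ℝ) : AddCircle (1 : ℝ)))

/-- `(ξ, η)` is an (absolute) Cheeger–Simons character of degree `p-1` on `Y`: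
`ξ : Z_{p-1}(Y) → ℝ/ℤ` a homomorphism, `η` an integral closed `p`-form on `Y`
(modelled by its pairing `Jη`), with `ξ(∂D') = ∫_{D'} η mod ℤ`. -/
def IsCharY (d : ChainData A2 A1 A0 Am1 B2 B1 B0 Bm1)
    (ξ : cyclesY d →+ AddCircle (1 : ℝ)) (Jη : B1 →+ ℝ) : Prop :=
  (∀ E : B2, Jη (d.dY2 E) = 0) ∧
  (∀ C' : B1, d.dY1 C' = 0 → ∃ n : ℤ, Jη C' = n) ∧
  (∀ (D' : B1) (h : d.dY1 D' ∈ cyclesY d),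
      ξ ⟨d.dY1 D', h⟩ = ((Jη D' : ℝ) : AddCircle (1 : ℝ)))

variable {Am2 : Type} [AddCommGroup Am2]

/-- The action of an absolute character `(ξ,η)` on type II relative characters:
`(ξ,η)·(χ,ω,ρ) = (χ - ξ∘π₂, ω, ρ + η)`.  `CS^p_{III}(f)` is its orbit space. -/
noncomputable def charAction (d : ChainData A2 A1 A0 Am1 B2 B1 B0 Bm1)
    (h : (cyclesY d →+ AddCircle (1 : ℝ)) × (B1 →+ ℝ))
    (x : (relCycles d →+ AddCircle (1 : ℝ)) × (A1 →+ ℝ) × (B1 →+ ℝ)) :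
    (relCycles d →+ AddCircle (1 : ℝ)) × (A1 →+ ℝ) × (B1 →+ ℝ) :=
  (x.1 - h.1.comp (proj2 d), x.2.1, x.2.2 + h.2)

/-- The map `i₃ : CS^{p-1}(Y) → CS^p_{II}(f)`, `(ξ,η) ↦ (χ, 0, η)` with
`χ(C,C') = -ξ(C')`. -/
noncomputable def i3 (d : ChainData A2 A1 A0 Am1 B2 B1 B0 Bm1)
    (ξ : cyclesY d →+ AddCircle (1 : ℝ)) (Jη : B1 →+ ℝ) :
    (relCycles d →+ AddCircle (1 : ℝ)) × (A1 →+ ℝ) × (B1 →+ ℝ) :=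
  (-(ξ.comp (proj2 d)), 0, Jη)

/-!
`i₃(ξ,η) = 0` means `η = 0` and `ξ ∘ π₂ = 0`, i.e. `ξ` kills every cycle `C'` of `Y` whose
push-forward `f_*C'` bounds in `X`. Then `(C', D) ↦ ξ C'` vanishes on the kernel of
`(C', D) ↦ f_*C' + ∂D`, so it factors through the image of that map in `C_{p-1}(X)`; since `ℝ/ℤ`
is divisible, hence an injective abelian group, the factored character extends to all of
`C_{p-1}(X)`, and its restriction `ζ` to cycles is a flat character pulling back to `ξ`.
Conversely a flat `ζ` kills `f_*C' = -∂C`. The action is translation by `i₃`, so its orbits are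
the cosets of `im i₃`.
-/

theorem AddMonoidHom.exists_comp_eq_of_ker_le {G H D : Type*} [AddCommGroup G] [AddCommGroup H]
    [AddCommGroup D] [DivisibleBy D ℤ] (φ : G →+ H) (ψ : G →+ D) (h : φ.ker ≤ ψ.ker) :
    ∃ g : H →+ D, g.comp φ = ψ := by
  obtain ⟨g, hg⟩ := (Module.Baer.of_divisible D).extension_property_addMonoidHom
    (QuotientAddGroup.kerLift φ) (QuotientAddGroup.kerLift_injective φ)
    (QuotientAddGroup.lift _ ψ h)
  exact ⟨g, AddMonoidHom.ext fun x => DFunLike.congr_fun hg (x : G ⧸ φ.ker)⟩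

/-- `Am2 = C_{p-2}(X)` and `dXm1 : C_{p-1}(X) → C_{p-2}(X)` is the boundary, so
`Z_{p-1}(X) = ker dXm1`. A flat character on `X` of degree `p-1` is `(ζ, 0)` with
`ζ : Z_{p-1}(X) → ℝ/ℤ` vanishing on boundaries; its pullback to `Y` is `(ζ ∘ f_*, 0)`. -/
def IsFlatPullback (d : ChainData A2 A1 A0 Am1 B2 B1 B0 Bm1) (dXm1 : Am1 →+ Am2)
    (ξ : cyclesY d →+ AddCircle (1 : ℝ)) : Prop :=
  ∃ ζ : dXm1.ker →+ AddCircle (1 : ℝ),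
    (∀ (D : A0) (h : d.dX0 D ∈ dXm1.ker), ζ ⟨d.dX0 D, h⟩ = 0) ∧
    (∀ (C' : B0) (h : C' ∈ cyclesY d) (h' : d.fm C' ∈ dXm1.ker),
      ξ ⟨C', h⟩ = ζ ⟨d.fm C', h'⟩)

section

variable (d : ChainData A2 A1 A0 Am1 B2 B1 B0 Bm1)

theorem i3_add (ξ ξ' : cyclesY d →+ AddCircle (1 : ℝ)) (Jη Jη' : B1 →+ ℝ) :
    i3 d (ξ + ξ') (Jη + Jη') = i3 d ξ Jη + i3 d ξ' Jη' := by
  simp only [i3, AddMonoidHom.add_comp, neg_add, Prod.mk_add_mk, add_zero]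

theorem i3_eq_zero_iff (ξ : cyclesY d →+ AddCircle (1 : ℝ)) (Jη : B1 →+ ℝ) :
    i3 d ξ Jη = 0 ↔ ξ.comp (proj2 d) = 0 ∧ Jη = 0 := by
  simp [i3, Prod.ext_iff]

theorem charAction_eq_add_i3 (ξ : cyclesY d →+ AddCircle (1 : ℝ)) (Jη : B1 →+ ℝ)
    (x : (relCycles d →+ AddCircle (1 : ℝ)) × (A1 →+ ℝ) × (B1 →+ ℝ)) :
    charAction d (ξ, Jη) x = x + i3 d ξ Jη := by
  simp only [charAction, i3, sub_eq_add_neg, Prod.ext_iff, Prod.fst_add, Prod.snd_add, add_zero,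
    and_self]

variable {d}

theorem IsCharY.isTypeII_i3 {ξ : cyclesY d →+ AddCircle (1 : ℝ)} {Jη : B1 →+ ℝ}
    (h : IsCharY d ξ Jη) : IsTypeII d (i3 d ξ Jη).1 (i3 d ξ Jη).2.1 (i3 d ξ Jη).2.2 := by
  obtain ⟨hη_closed, hη_integral, hξ_bdry⟩ := h
  refine ⟨fun _ => rfl, fun E => (hη_closed E).symm, fun _ C' _ hC' => ?_, fun D D' hz => ?_⟩
  · obtain ⟨n, hn⟩ := hη_integral C' hC'
    exact ⟨n, by simpa [i3] using hn⟩
  · have hcycle : d.dY1 D' ∈ cyclesY d := neg_mem_iff.mp hz.2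
    have hproj : proj2 d ⟨_, hz⟩ = -⟨d.dY1 D', hcycle⟩ := rfl
    simp only [i3, AddMonoidHom.neg_apply, AddMonoidHom.comp_apply, hproj, map_neg, neg_neg,
      hξ_bdry D' hcycle, AddMonoidHom.zero_apply, zero_add]

theorem isFlatPullback_of_comp_proj2_eq_zero (dXm1 : Am1 →+ Am2)
    {ξ : cyclesY d →+ AddCircle (1 : ℝ)} (hξ : ξ.comp (proj2 d) = 0) :
    IsFlatPullback d dXm1 ξ := by
  let φ : cyclesY d × A0 →+ Am1 := (d.fm.comp (cyclesY d).subtype).coprod d.dX0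
  have hker : φ.ker ≤ (ξ.comp (AddMonoidHom.fst _ _)).ker := by
    rintro ⟨c, a⟩ hca
    have hz : (a, (c : B0)) ∈ relCycles d := ⟨by rw [add_comm]; exact hca, c.2⟩
    exact DFunLike.congr_fun hξ ⟨_, hz⟩
  obtain ⟨g, hg⟩ := AddMonoidHom.exists_comp_eq_of_ker_le φ _ hker
  refine ⟨g.comp dXm1.ker.subtype, fun D _ => ?_, fun C' hC' _ => ?_⟩
  · simpa [φ] using DFunLike.congr_fun hg (0, D)
  · simpa [φ] using (DFunLike.congr_fun hg (⟨C', hC'⟩, 0)).symm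

theorem comp_proj2_eq_zero_of_isFlatPullback {dXm1 : Am1 →+ Am2} {fmm : Bm1 →+ Am2}
    (hfm : ∀ x : B0, dXm1 (d.fm x) = fmm (d.dY0 x)) {ξ : cyclesY d →+ AddCircle (1 : ℝ)}
    (h : IsFlatPullback d dXm1 ξ) : ξ.comp (proj2 d) = 0 := by
  obtain ⟨ζ, hζ_bdry, hζ_pull⟩ := h
  ext ⟨⟨C, C'⟩, hrel, hC'⟩
  have hpush : d.fm C' = d.dX0 (-C) := by
    rw [map_neg]; exact eq_neg_of_add_eq_zero_right hrel
  have hmem : d.fm C' ∈ dXm1.ker := by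
    rw [AddMonoidHom.mem_ker, hfm, hC', map_zero]
  calc ξ ⟨C', hC'⟩ = ζ ⟨d.fm C', hmem⟩ := hζ_pull C' hC' hmem
    _ = ζ ⟨d.dX0 (-C), hpush ▸ hmem⟩ := by simp only [hpush]
    _ = 0 := hζ_bdry _ _

theorem comp_proj2_eq_zero_iff_isFlatPullback {dXm1 : Am1 →+ Am2} {fmm : Bm1 →+ Am2}
    (hfm : ∀ x : B0, dXm1 (d.fm x) = fmm (d.dY0 x)) (ξ : cyclesY d →+ AddCircle (1 : ℝ)) :
    ξ.comp (proj2 d) = 0 ↔ IsFlatPullback d dXm1 ξ :=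
  ⟨isFlatPullback_of_comp_proj2_eq_zero dXm1, comp_proj2_eq_zero_of_isFlatPullback hfm⟩

end

theorem stmt_8_general (d : ChainData A2 A1 A0 Am1 B2 B1 B0 Bm1)
    (dXm1 : Am1 →+ Am2) (fmm : Bm1 →+ Am2)
    (hfm : ∀ x : B0, dXm1 (d.fm x) = fmm (d.dY0 x)) :
    (∀ (ξ ξ' : cyclesY d →+ AddCircle (1 : ℝ)) (Jη Jη' : B1 →+ ℝ),
        i3 d (ξ + ξ') (Jη + Jη') = i3 d ξ Jη + i3 d ξ' Jη') ∧
    (∀ (ξ : cyclesY d →+ AddCircle (1 : ℝ)) (Jη : B1 →+ ℝ), IsCharY d ξ Jη →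
        IsTypeII d (-(ξ.comp (proj2 d))) 0 Jη) ∧
    (∀ (ξ : cyclesY d →+ AddCircle (1 : ℝ)) (Jη : B1 →+ ℝ), IsCharY d ξ Jη →
        (i3 d ξ Jη = 0 ↔
          (Jη = 0 ∧ ∃ ζ : dXm1.ker →+ AddCircle (1 : ℝ),
            (∀ (D : A0) (h : d.dX0 D ∈ dXm1.ker), ζ ⟨d.dX0 D, h⟩ = 0) ∧
            (∀ (C' : B0) (h : C' ∈ cyclesY d) (h' : d.fm C' ∈ dXm1.ker),
              ξ ⟨C', h⟩ = ζ ⟨d.fm C', h'⟩)))) ∧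
    (∀ x y : (relCycles d →+ AddCircle (1 : ℝ)) × (A1 →+ ℝ) × (B1 →+ ℝ),
        IsTypeII d x.1 x.2.1 x.2.2 → IsTypeII d y.1 y.2.1 y.2.2 →
        ((∃ (ξ : cyclesY d →+ AddCircle (1 : ℝ)) (Jη : B1 →+ ℝ),
            IsCharY d ξ Jη ∧ charAction d (ξ, Jη) x = y) ↔
          (∃ (ξ : cyclesY d →+ AddCircle (1 : ℝ)) (Jη : B1 →+ ℝ),
            IsCharY d ξ Jη ∧ y = x + i3 d ξ Jη))) := by
  refine ⟨i3_add d, fun _ _ h => h.isTypeII_i3, fun ξ Jη _ => ?_, fun x y _ _ => ?_⟩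
  · rw [i3_eq_zero_iff, and_comm, comp_proj2_eq_zero_iff_isFlatPullback hfm]
    rfl
  · simp only [charAction_eq_add_i3, @eq_comm _ y]

theorem stmt_8 (d : ChainData A2 A1 A0 Am1 B2 B1 B0 Bm1)
    (dXm1 : Am1 →+ Am2) (fmm : Bm1 →+ Am2)
    (hXm : ∀ a : A0, dXm1 (d.dX0 a) = 0)
    (hfm : ∀ x : B0, dXm1 (d.fm x) = fmm (d.dY0 x)) :
    (∀ (ξ ξ' : cyclesY d →+ AddCircle (1 : ℝ)) (Jη Jη' : B1 →+ ℝ),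
        i3 d (ξ + ξ') (Jη + Jη') = i3 d ξ Jη + i3 d ξ' Jη') ∧
    (∀ (ξ : cyclesY d →+ AddCircle (1 : ℝ)) (Jη : B1 →+ ℝ), IsCharY d ξ Jη →
        IsTypeII d (-(ξ.comp (proj2 d))) 0 Jη) ∧
    (∀ (ξ : cyclesY d →+ AddCircle (1 : ℝ)) (Jη : B1 →+ ℝ), IsCharY d ξ Jη →
        (i3 d ξ Jη = 0 ↔
          (Jη = 0 ∧ ∃ ζ : dXm1.ker →+ AddCircle (1 : ℝ),
            (∀ (D : A0) (h : d.dX0 D ∈ dXm1.ker), ζ ⟨d.dX0 D, h⟩ = 0) ∧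
            (∀ (C' : B0) (h : C' ∈ cyclesY d) (h' : d.fm C' ∈ dXm1.ker),
              ξ ⟨C', h⟩ = ζ ⟨d.fm C', h'⟩)))) ∧
    (∀ x y : (relCycles d →+ AddCircle (1 : ℝ)) × (A1 →+ ℝ) × (B1 →+ ℝ),
        IsTypeII d x.1 x.2.1 x.2.2 → IsTypeII d y.1 y.2.1 y.2.2 →
        ((∃ (ξ : cyclesY d →+ AddCircle (1 : ℝ)) (Jη : B1 →+ ℝ),
            IsCharY d ξ Jη ∧ charAction d (ξ, Jη) x = y) ↔
          (∃ (ξ : cyclesY d →+ AddCircle (1 : ℝ)) (Jη : B1 →+ ℝ),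
            IsCharY d ξ Jη ∧ y = x + i3 d ξ Jη))) :=
  stmt_8_general d dXm1 fmm hfm
end
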